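/- arXiv:1009.5162 — 2 statements merged into one kernel-verified Lean document; each statement's English description precedes it below -/
import Mathlib

section
/- If G is a simple connected graph with n vertices, then the optimal rubbling number satisfies ρ_opt(G) ≤ ⌈(n + 1)/2⌉. -/
open Finset

variable {V : Type*}

/-- A pebbling move: remove two pebbles at a vertex `v` and add one pebble at an
adjacent vertex `u`. -/
def IsPebblingMove (G : SimpleGraph V) (p p' : V → ℕ) : Prop :=
  ∃ v u, G.Adj v u ∧ 2 ≤ p v ∧
    p' v = p v - 2 ∧ p' u = p u + 1 ∧ ∀ z, z ≠ v → z ≠ u → p' z = p z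

/-- A strict rubbling move: remove one pebble each at distinct vertices `v` and `w`,
both adjacent to `u`, and add one pebble at `u`. -/
def IsStrictRubblingMove (G : SimpleGraph V) (p p' : V → ℕ) : Prop :=
  ∃ v w u, v ≠ w ∧ G.Adj v u ∧ G.Adj w u ∧ 1 ≤ p v ∧ 1 ≤ p w ∧
    p' v = p v - 1 ∧ p' w = p w - 1 ∧ p' u = p u + 1 ∧
    ∀ z, z ≠ v → z ≠ w → z ≠ u → p' z = p z

/-- A rubbling move is a pebbling move or a strict rubbling move. -/
def IsRubblingMove (G : SimpleGraph V) (p p' : V → ℕ) : Prop :=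
  IsPebblingMove G p p' ∨ IsStrictRubblingMove G p p'

/-- A vertex `x` is reachable from the pebble distribution `p` if some executable
sequence of rubbling moves leads to a distribution with a pebble on `x`. -/
def RubblingReachable (G : SimpleGraph V) (p : V → ℕ) (x : V) : Prop :=
  ∃ q : V → ℕ, Relation.ReflTransGen (IsRubblingMove G) p q ∧ 1 ≤ q x

/-- The rubbling number: the least `m` such that every vertex is reachable from
every pebble distribution of size `m`. -/
noncomputable def rubblingNumber (G : SimpleGraph V) [Fintype V] : ℕ :=
  sInf {m | ∀ p : V → ℕ, ∑ v, p v = m → ∀ x, RubblingReachable G p x}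

/-- The optimal rubbling number: the least size of a pebble distribution from which
every vertex is reachable. -/
noncomputable def optimalRubblingNumber (G : SimpleGraph V) [Fintype V] : ℕ :=
  sInf {m | ∃ p : V → ℕ, ∑ v, p v = m ∧ ∀ x, RubblingReachable G p x}

/-!
Induction on the number of vertices, deleting two vertices per step at the cost of one pebble.
In a spanning tree take a longest path `x v w …`; its end `x` is a leaf. If `v` has a neighbour
`y ∉ {x, w}`, then `y` is a leaf too: delete `x` and `y`, and put one extra pebble on `v`; with the
pebble that the rest of the graph can send to `v`, a pebbling move reaches `x` or `y`. Otherwise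
`v` has degree two, so deleting `x` and `v` leaves the tree connected: put one extra pebble on `x`;
with the pebble that the rest can send to `w`, a strict rubbling move reaches `v`.
-/

section

variable {W : Type*} {G : SimpleGraph V} {H : SimpleGraph W}

lemma IsRubblingMove.add_right {p q : V → ℕ} (h : IsRubblingMove G p q) (r : V → ℕ) :
    IsRubblingMove G (p + r) (q + r) := by
  simp only [IsRubblingMove, IsPebblingMove, IsStrictRubblingMove, Pi.add_apply] at h ⊢
  rcases h with ⟨v, u, hvu, hv, hqv, hqu, hq⟩ | ⟨v, w, u, hvw, hvu, hwu, hv, hw, hqv, hqw, hqu, hq⟩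
  · exact .inl ⟨v, u, hvu, by omega, by omega, by omega, fun z hzv hzu ↦ by rw [hq z hzv hzu]⟩
  · exact .inr ⟨v, w, u, hvw, hvu, hwu, by omega, by omega, by omega, by omega, by omega,
      fun z hzv hzw hzu ↦ by rw [hq z hzv hzw hzu]⟩

lemma IsRubblingMove.reflTransGen_add_right {p q : V → ℕ}
    (h : Relation.ReflTransGen (IsRubblingMove G) p q) (r : V → ℕ) :
    Relation.ReflTransGen (IsRubblingMove G) (p + r) (q + r) :=
  h.lift (· + r) fun _ _ hab ↦ hab.add_right r

lemma extend_zero_apply_congr {f : W → V} {g g' : W → ℕ} {z : V}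
    (h : ∀ a, f a = z → g' a = g a) : Function.extend f g' 0 z = Function.extend f g 0 z := by
  unfold Function.extend
  split_ifs with hz
  exacts [h _ hz.choose_spec, rfl]

lemma IsRubblingMove.extend (f : H ↪g G) {p q : W → ℕ} (h : IsRubblingMove H p q) :
    IsRubblingMove G (Function.extend f p 0) (Function.extend f q 0) := by
  have hf : Function.Injective f := f.injective
  rcases h with ⟨v, u, hvu, hv, hqv, hqu, hq⟩ | ⟨v, w, u, hvw, hvu, hwu, hv, hw, hqv, hqw, hqu, hq⟩
  · refine .inl ⟨f v, f u, f.map_adj_iff.2 hvu, by simpa only [hf.extend_apply],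
      by simp only [hf.extend_apply, hqv], by simp only [hf.extend_apply, hqu], fun z hzv hzu ↦ ?_⟩
    exact extend_zero_apply_congr fun a ha ↦ hq a (by rintro rfl; exact hzv ha.symm)
      (by rintro rfl; exact hzu ha.symm)
  · refine .inr ⟨f v, f w, f u, hf.ne hvw, f.map_adj_iff.2 hvu, f.map_adj_iff.2 hwu,
      by simpa only [hf.extend_apply], by simpa only [hf.extend_apply],
      by simp only [hf.extend_apply, hqv], by simp only [hf.extend_apply, hqw],
      by simp only [hf.extend_apply, hqu], fun z hzv hzw hzu ↦ ?_⟩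
    exact extend_zero_apply_congr fun a ha ↦ hq a (by rintro rfl; exact hzv ha.symm)
      (by rintro rfl; exact hzw ha.symm) (by rintro rfl; exact hzu ha.symm)

lemma IsRubblingMove.reflTransGen_extend (f : H ↪g G) {p q : W → ℕ}
    (h : Relation.ReflTransGen (IsRubblingMove H) p q) :
    Relation.ReflTransGen (IsRubblingMove G) (Function.extend f p 0) (Function.extend f q 0) :=
  h.lift (fun r : W → ℕ ↦ Function.extend f r 0) fun _ _ hab ↦ hab.extend f

lemma RubblingReachable.exists_extend_add (f : H ↪g G) {p : W → ℕ} {x : W}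
    (h : RubblingReachable H p x) (r : V → ℕ) :
    ∃ q, Relation.ReflTransGen (IsRubblingMove G) (Function.extend f p 0 + r) q ∧
      r ≤ q ∧ r (f x) < q (f x) := by
  obtain ⟨q, hpq, hx⟩ := h
  refine ⟨Function.extend f q 0 + r, IsRubblingMove.reflTransGen_add_right
    (IsRubblingMove.reflTransGen_extend f hpq) r, le_add_self, ?_⟩
  simp only [Pi.add_apply, f.injective.extend_apply]
  omega

lemma sum_extend_eq [Fintype V] [Fintype W] (f : H ↪g G) (p : W → ℕ) :
    ∑ v, Function.extend f p 0 v = ∑ w, p w :=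
  (Fintype.sum_of_injective f f.injective p _ (fun v hv ↦ Function.extend_apply' (f := f) p 0 v hv)
    fun _ ↦ (f.injective.extend_apply _ _ _).symm).symm

lemma rubblingReachable_of_pebblingMove [DecidableEq V] {p q : V → ℕ} {v u : V}
    (hpq : Relation.ReflTransGen (IsRubblingMove G) p q) (hvu : G.Adj v u) (hv : 2 ≤ q v) :
    RubblingReachable G p u := by
  refine ⟨Function.update (Function.update q v (q v - 2)) u (q u + 1),
    hpq.tail (.inl ⟨v, u, hvu, hv, ?_, ?_, fun z hzv hzu ↦ ?_⟩), ?_⟩ <;>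
    simp [hvu.ne, *]

lemma rubblingReachable_of_strictRubblingMove [DecidableEq V] {p q : V → ℕ} {v w u : V}
    (hpq : Relation.ReflTransGen (IsRubblingMove G) p q) (hvw : v ≠ w) (hvu : G.Adj v u)
    (hwu : G.Adj w u) (hv : 1 ≤ q v) (hw : 1 ≤ q w) :
    RubblingReachable G p u := by
  refine ⟨Function.update (Function.update (Function.update q v (q v - 1)) w (q w - 1)) u
      (q u + 1), hpq.tail (.inr ⟨v, w, u, hvw, hvu, hwu, hv, hw, ?_, ?_, ?_,
      fun z hzv hzw hzu ↦ ?_⟩), ?_⟩ <;>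
    simp [hvu.ne, hwu.ne, *]

namespace SimpleGraph

theorem IsAcyclic.eq_snd_of_adj_of_forall_length_le (hG : G.IsAcyclic) {u v : V}
    {p : G.Walk u v} (hp : p.IsPath)
    (hmax : ∀ a b (q : G.Walk a b), q.IsPath → q.length ≤ p.length) ⦃w : V⦄ (huw : G.Adj u w) :
    w = p.snd := by
  by_contra hw
  have hwp : w ∉ p.support := fun h ↦ hw (hG.eq_snd_of_adj_start hp huw h)
  have := hmax _ _ _ (hp.cons hwp (h := huw.symm))
  simp at this

theorem Preconnected.induce_diff_singleton {s : Set V} (hs : (G.induce s).Preconnected) {v : V}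
    (hv : (G.neighborSet v ∩ s).Subsingleton) : (G.induce (s \ {v})).Preconnected := by
  have hpre := hs.induce_of_degree_eq_one (s := {z : s | (z : V) ≠ v}) <| by
    rintro ⟨z, hz⟩ hzv a ha b hb
    obtain rfl : z = v := not_not.mp hzv
    exact Subtype.ext (hv ⟨ha, a.2⟩ ⟨hb, b.2⟩)
  let φ : (G.induce s).induce {z : s | (z : V) ≠ v} →g G.induce (s \ {v}) :=
    ⟨fun z ↦ ⟨z.1.1, z.1.2, z.2⟩, fun h ↦ h⟩
  rintro ⟨a, has, hav⟩ ⟨b, hbs, hbv⟩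
  exact (hpre ⟨⟨a, has⟩, hav⟩ ⟨⟨b, hbs⟩, hbv⟩).map φ

theorem IsTree.two_le_length_of_forall_length_le [Fintype V] (hT : G.IsTree)
    (h3 : 3 ≤ Fintype.card V) {x z : V} {P : G.Walk x z} (hP : P.IsPath)
    (hmax : ∀ a b (q : G.Walk a b), q.IsPath → q.length ≤ P.length) : 2 ≤ P.length := by
  classical
  by_contra! hlen
  obtain ⟨c, -, hc⟩ := exists_mem_notMem_of_card_lt_card (s := {x, P.snd}) (t := univ)
    (card_le_two.trans_lt (by rw [card_univ]; omega))
  obtain ⟨q, hq⟩ := hT.connected.exists_isPath c x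
  have hq1 : q.length = 1 := by
    have := hmax _ _ q hq
    have : q.length ≠ 0 := fun h ↦ hc (by simp [Walk.eq_of_length_eq_zero h])
    omega
  have hcx := (Walk.adj_of_length_eq_one hq1).symm
  exact hc (by simp [hT.isAcyclic.eq_snd_of_adj_of_forall_length_le hP hmax hcx])

theorem IsTree.exists_removable_pair [Fintype V] (hT : G.IsTree) (h3 : 3 ≤ Fintype.card V) :
    (∃ u v w, G.Adj u v ∧ G.Adj w v ∧ w ≠ u ∧ (G.induce {u, v}ᶜ).Connected) ∨
    (∃ u v y, G.Adj v u ∧ G.Adj v y ∧ u ≠ y ∧ (G.induce {u, y}ᶜ).Connected) := by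
  have : Nonempty V := hT.connected.nonempty
  obtain ⟨x, z, P, hP, hmax⟩ := Walk.exists_isPath_forall_isPath_length_le_length G
  have hlen := hT.two_le_length_of_forall_length_le h3 hP hmax
  have hleaf := hT.isAcyclic.eq_snd_of_adj_of_forall_length_le hP hmax
  cases P with
  | nil => simp at hlen
  | @cons _ v _ hxv P' =>
  cases P' with
  | nil => simp at hlen
  | @cons _ w _ hvw Q =>
  have hx : x ∉ (Walk.cons hvw Q).support := ((Walk.cons_isPath_iff _ _).1 hP).2
  have hwx : w ≠ x := fun h ↦ hx (by rw [← h]; simp)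
  have hxleaf : ∀ ⦃y⦄, G.Adj x y → y = v := by simpa using hleaf
  by_cases hfork : ∃ y, G.Adj v y ∧ y ≠ x ∧ y ≠ w
  · obtain ⟨y, hvy, hyx, hyw⟩ := hfork
    have hy : y ∉ (Walk.cons hvw Q).support := fun h ↦
      hyw (by simpa using hT.isAcyclic.eq_snd_of_adj_start hP.of_cons hvy h)
    have hyP : (Walk.cons hvy.symm (Walk.cons hvw Q)).IsPath := hP.of_cons.cons hy
    have hyleaf : ∀ ⦃t⦄, G.Adj y t → t = v := by
      simpa using hT.isAcyclic.eq_snd_of_adj_of_forall_length_le hyP (by simpa using hmax)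
    refine .inr ⟨x, v, y, hxv.symm, hvy, hyx.symm, (connected_iff _).2 ⟨?_, ⟨v, ?_⟩⟩⟩
    · refine hT.connected.preconnected.induce_of_degree_eq_one fun t ht a ha b hb ↦ ?_
      obtain rfl | rfl : t = x ∨ t = y := by simpa [or_iff_not_imp_left] using ht
      · exact (hxleaf ha).trans (hxleaf hb).symm
      · exact (hyleaf ha).trans (hyleaf hb).symm
    · simp [hxv.ne', hvy.ne]
  · push Not at hfork
    refine .inl ⟨x, v, w, hxv, hvw.symm, hwx, ?_⟩
    have hxcut : (G.induce {x}ᶜ).Preconnected :=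
      hT.connected.preconnected.induce_of_degree_eq_one fun t ht a ha b hb ↦ by
        obtain rfl : t = x := by simpa using ht
        exact (hxleaf ha).trans (hxleaf hb).symm
    have hvcut := hxcut.induce_diff_singleton (v := v) fun a ha b hb ↦
      (hfork a ha.1 ha.2).trans (hfork b hb.1 hb.2).symm
    rw [show ({x, v}ᶜ : Set V) = {x}ᶜ \ {v} by ext; simp [not_or]]
    exact (connected_iff _).2 ⟨hvcut, ⟨w, by simp [hwx, hvw.ne']⟩⟩

theorem Connected.exists_removable_pair [Fintype V] (hG : G.Connected)
    (h3 : 3 ≤ Fintype.card V) :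
    (∃ u v w, G.Adj u v ∧ G.Adj w v ∧ w ≠ u ∧ (G.induce {u, v}ᶜ).Connected) ∨
    (∃ u v y, G.Adj v u ∧ G.Adj v y ∧ u ≠ y ∧ (G.induce {u, y}ᶜ).Connected) := by
  obtain ⟨T, hTG, hT⟩ := hG.exists_isTree_le
  have hind (s : Set V) : T.induce s ≤ G.induce s := fun _ _ h ↦ hTG h
  rcases hT.exists_removable_pair h3 with
    ⟨u, v, w, huv, hwv, hwu, hc⟩ | ⟨u, v, y, hvu, hvy, huy, hc⟩
  · exact .inl ⟨u, v, w, hTG huv, hTG hwv, hwu, hc.mono (hind _)⟩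
  · exact .inr ⟨u, v, y, hTG hvu, hTG hvy, huy, hc.mono (hind _)⟩

end SimpleGraph

open SimpleGraph

lemma exists_rubbling_sum_le_of_card_le_two [Fintype V] (hG : G.Connected)
    (h2 : Fintype.card V ≤ 2) :
    ∃ p : V → ℕ, ∑ v, p v ≤ (Fintype.card V + 2) / 2 ∧ ∀ x, RubblingReachable G p x := by
  classical
  obtain ⟨x⟩ := hG.nonempty
  refine ⟨Pi.single x (Fintype.card V), by simp; omega, fun y ↦ ?_⟩
  by_cases hyx : y = x
  · subst hyx
    exact ⟨_, .refl, by simpa using Nat.succ_le_of_lt (Fintype.card_pos_iff.2 ⟨y⟩)⟩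
  obtain ⟨q⟩ := hG.preconnected x y
  have hq : ¬q.Nil := Walk.not_nil_of_ne (Ne.symm hyx)
  have hxq : G.Adj x q.snd := q.adj_snd hq
  have hqy : q.snd = y := by
    by_contra hqy
    have := card_le_univ ({x, y, q.snd} : Finset V)
    rw [card_eq_three.2 ⟨x, y, q.snd, Ne.symm hyx, hxq.ne, Ne.symm hqy, rfl⟩] at this
    omega
  have hcard : 2 ≤ Fintype.card V := by
    simpa [Ne.symm hyx] using card_le_univ ({x, y} : Finset V)
  exact rubblingReachable_of_pebblingMove .refl (hqy ▸ hxq) (by simpa using hcard)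

lemma exists_rubbling_sum_le_add_one_of_adj [Fintype V] [DecidableEq V] {u v w : V}
    (huv : G.Adj u v) (hwv : G.Adj w v) (hwu : w ≠ u) {m : ℕ}
    (h : ∃ p : ({u, v}ᶜ : Set V) → ℕ,
      ∑ z, p z ≤ m ∧ ∀ x, RubblingReachable (G.induce {u, v}ᶜ) p x) :
    ∃ p : V → ℕ, ∑ z, p z ≤ m + 1 ∧ ∀ x, RubblingReachable G p x := by
  obtain ⟨p, hsum, hp⟩ := h
  let f := Embedding.induce (G := G) ({u, v}ᶜ : Set V)
  refine ⟨Function.extend f p 0 + Pi.single u 1, ?_, fun x ↦ ?_⟩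
  · simpa [sum_add_distrib, sum_extend_eq] using hsum
  by_cases hx : x ∈ ({u, v}ᶜ : Set V)
  · obtain ⟨q, hq, -, hqx⟩ := (hp ⟨x, hx⟩).exists_extend_add f (Pi.single u 1)
    exact ⟨q, hq, Nat.one_le_of_lt hqx⟩
  obtain hxu | hxv : x = u ∨ x = v := by simpa [or_iff_not_imp_left] using hx
  · subst x
    exact ⟨_, .refl, by simp⟩
  · subst x
    obtain ⟨q, hq, hqu, hqw⟩ :=
      (hp ⟨w, by simp [hwu, hwv.ne]⟩).exists_extend_add f (Pi.single u 1)
    exact rubblingReachable_of_strictRubblingMove hq hwu.symm huv hwv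
      (by simpa using hqu u) (Nat.one_le_of_lt hqw)

lemma exists_rubbling_sum_le_add_one_of_common_adj [Fintype V] [DecidableEq V] {u v y : V}
    (hvu : G.Adj v u) (hvy : G.Adj v y) (huy : u ≠ y) {m : ℕ}
    (h : ∃ p : ({u, y}ᶜ : Set V) → ℕ,
      ∑ z, p z ≤ m ∧ ∀ x, RubblingReachable (G.induce {u, y}ᶜ) p x) :
    ∃ p : V → ℕ, ∑ z, p z ≤ m + 1 ∧ ∀ x, RubblingReachable G p x := by
  obtain ⟨p, hsum, hp⟩ := h
  let f := Embedding.induce (G := G) ({u, y}ᶜ : Set V)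
  refine ⟨Function.extend f p 0 + Pi.single v 1, ?_, fun x ↦ ?_⟩
  · simpa [sum_add_distrib, sum_extend_eq] using hsum
  by_cases hx : x ∈ ({u, y}ᶜ : Set V)
  · obtain ⟨q, hq, -, hqx⟩ := (hp ⟨x, hx⟩).exists_extend_add f (Pi.single v 1)
    exact ⟨q, hq, Nat.one_le_of_lt hqx⟩
  obtain ⟨q, hq, -, hqv⟩ :=
    (hp ⟨v, by simp [hvu.ne, hvy.ne]⟩).exists_extend_add f (Pi.single v 1)
  have hv : 1 < q v := by simpa [f] using hqv
  obtain rfl | rfl : x = u ∨ x = y := by simpa [or_iff_not_imp_left] using hx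
  · exact rubblingReachable_of_pebblingMove hq hvu hv
  · exact rubblingReachable_of_pebblingMove hq hvy hv

theorem optimalRubblingNumber_le_sum [Fintype V] (p : V → ℕ)
    (hp : ∀ x, RubblingReachable G p x) : optimalRubblingNumber G ≤ ∑ v, p v :=
  Nat.sInf_le ⟨p, rfl, hp⟩

theorem SimpleGraph.Connected.exists_rubbling_sum_le [Fintype V] (hG : G.Connected) :
    ∃ p : V → ℕ, ∑ v, p v ≤ (Fintype.card V + 2) / 2 ∧ ∀ x, RubblingReachable G p x := by
  classical
  induction hn : Fintype.card V using Nat.strong_induction_on generalizing V with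
  | _ n ih =>
  by_cases h2 : n ≤ 2
  · subst n
    exact exists_rubbling_sum_le_of_card_le_two hG h2
  have hcard {a b : V} (hab : a ≠ b) : Fintype.card ({a, b}ᶜ : Set V) = n - 2 := by
    rw [Fintype.card_compl_set, hn, Set.card_insert {b} hab, Set.card_singleton]
  rcases hG.exists_removable_pair (by omega) with
    ⟨u, v, w, huv, hwv, hwu, hc⟩ | ⟨u, v, y, hvu, hvy, huy, hc⟩
  · obtain ⟨p, hsum, hp⟩ := exists_rubbling_sum_le_add_one_of_adj huv hwv hwu
      (ih (n - 2) (by omega) hc (hcard huv.ne))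
    exact ⟨p, hsum.trans (by omega), hp⟩
  · obtain ⟨p, hsum, hp⟩ := exists_rubbling_sum_le_add_one_of_common_adj hvu hvy huy
      (ih (n - 2) (by omega) hc (hcard huy))
    exact ⟨p, hsum.trans (by omega), hp⟩

end

/-- If `G` is a connected graph with `n` vertices, then `ρ_opt(G) ≤ ⌈(n + 1)/2⌉`. -/
theorem optimalRubblingNumber_le {V : Type*} [Fintype V] (G : SimpleGraph V)
    (hconn : G.Connected) (n : ℕ) (hn : Fintype.card V = n) :
    optimalRubblingNumber G ≤ (n + 1 + 1) / 2 := by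
  obtain ⟨p, hsum, hp⟩ := hconn.exists_rubbling_sum_le
  exact (optimalRubblingNumber_le_sum p hp).trans (by omega)
end

section
/- Let G be a simple connected graph, let x be a vertex of G, and let p be a pebble distribution on G. If Σ_{v ∈ V(G)} p(v) · 2^{−dist(x,v)} < 1, then x is not reachable from p by rubbling moves. -/
open Finset

variable {V : Type*}

lemma half_pow_adj {V : Type*} (G : SimpleGraph V) (hconn : G.Connected) (x v u : V)
    (h : G.Adj v u) : ((1:ℚ)/2) ^ G.dist x u ≤ 2 * (1/2) ^ G.dist x v := by
  have hd : G.dist x v ≤ G.dist x u + 1 := by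
    have := hconn.dist_triangle (u := x) (v := u) (w := v)
    rwa [SimpleGraph.dist_eq_one_iff_adj.2 h.symm] at this
  have h1 : ((1:ℚ)/2) ^ (G.dist x u + 1) ≤ (1/2) ^ G.dist x v :=
    pow_le_pow_of_le_one (by norm_num) (by norm_num) hd
  rw [pow_succ] at h1
  linarith

lemma weight_nonincreasing {V : Type*} [Fintype V] (G : SimpleGraph V)
    (hconn : G.Connected) (x : V) (p p' : V → ℕ) (h : IsRubblingMove G p p') :
    ∑ v, (p' v : ℚ) * (1 / 2) ^ G.dist x v ≤ ∑ v, (p v : ℚ) * (1 / 2) ^ G.dist x v := by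
  classical
  set w : V → ℚ := fun v => (1/2) ^ G.dist x v with hw
  have hwpos : ∀ v, 0 < w v := fun v => by positivity
  rcases h with ⟨v, u, hadj, hpv, hv, hu, hrest⟩ | ⟨v, t, u, hvt, hadj1, hadj2, hpv, hpt, hv, ht, hu, hrest⟩
  · have hvu : v ≠ u := hadj.ne
    have split : ∀ q : V → ℕ, ∑ z, (q z : ℚ) * w z
        = (q v) * w v + ((q u) * w u + ∑ z ∈ (univ.erase v).erase u, (q z : ℚ) * w z) := by
      intro q
      rw [← Finset.add_sum_erase univ (fun z => (q z : ℚ) * w z) (mem_univ v),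
        ← Finset.add_sum_erase _ (fun z => (q z : ℚ) * w z)
          (Finset.mem_erase.2 ⟨hvu.symm, mem_univ u⟩)]
    rw [split, split]
    have hle := half_pow_adj G hconn x v u hadj
    have hcast : ((p v - 2 : ℕ) : ℚ) = (p v : ℚ) - 2 := by
      push_cast [Nat.cast_sub hpv]; ring
    have heq : ∑ z ∈ (univ.erase v).erase u, (p' z : ℚ) * w z
        = ∑ z ∈ (univ.erase v).erase u, (p z : ℚ) * w z := by
      refine Finset.sum_congr rfl fun z hz => ?_
      simp only [Finset.mem_erase] at hz
      rw [hrest z hz.2.1 hz.1]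
    rw [heq, hv, hu, hcast]
    push_cast
    nlinarith [hwpos v, hwpos u]
  · have hvu : v ≠ u := hadj1.ne
    have htu : t ≠ u := hadj2.ne
    have split : ∀ q : V → ℕ, ∑ z, (q z : ℚ) * w z
        = (q v) * w v + ((q t) * w t + ((q u) * w u
          + ∑ z ∈ ((univ.erase v).erase t).erase u, (q z : ℚ) * w z)) := by
      intro q
      rw [← Finset.add_sum_erase univ (fun z => (q z : ℚ) * w z) (mem_univ v),
        ← Finset.add_sum_erase _ (fun z => (q z : ℚ) * w z)
          (Finset.mem_erase.2 ⟨hvt.symm, mem_univ t⟩),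
        ← Finset.add_sum_erase _ (fun z => (q z : ℚ) * w z)
          (Finset.mem_erase.2 ⟨htu.symm, Finset.mem_erase.2 ⟨hvu.symm, mem_univ u⟩⟩)]
    rw [split, split]
    have h1 := half_pow_adj G hconn x v u hadj1
    have h2 := half_pow_adj G hconn x t u hadj2
    have heq : ∑ z ∈ ((univ.erase v).erase t).erase u, (p' z : ℚ) * w z
        = ∑ z ∈ ((univ.erase v).erase t).erase u, (p z : ℚ) * w z := by
      refine Finset.sum_congr rfl fun z hz => ?_
      simp only [Finset.mem_erase] at hz
      rw [hrest z hz.2.2.1 hz.2.1 hz.1]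
    rw [heq, hv, ht, hu, Nat.cast_sub hpv, Nat.cast_sub hpt]
    push_cast
    nlinarith [hwpos v, hwpos t, hwpos u]


/-- If the weight `Σ_v p(v)·2^{-dist(x,v)}` of a pebble distribution `p` is less
than 1, then `x` is not reachable from `p`. -/
theorem not_reachable_of_weight_lt_one {V : Type*} [Fintype V] (G : SimpleGraph V)
    (hconn : G.Connected) (x : V) (p : V → ℕ)
    (hw : ∑ v, (p v : ℚ) * (1 / 2) ^ G.dist x v < 1) :
    ¬ RubblingReachable G p x := by
  rintro ⟨q, hsteps, hqx⟩
  have hone : (1:ℚ) ≤ ∑ v, (q v : ℚ) * (1 / 2) ^ G.dist x v := by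
    have hx : (1:ℚ) ≤ (q x : ℚ) * (1 / 2) ^ G.dist x x := by
      rw [SimpleGraph.dist_self, pow_zero, mul_one]
      exact_mod_cast hqx
    exact le_trans hx (Finset.single_le_sum
      (f := fun v => (q v : ℚ) * (1 / 2) ^ G.dist x v) (fun v _ => by positivity) (mem_univ x))
  have hmono : ∀ r : V → ℕ, Relation.ReflTransGen (IsRubblingMove G) p r →
      ∑ v, (r v : ℚ) * (1 / 2) ^ G.dist x v ≤ ∑ v, (p v : ℚ) * (1 / 2) ^ G.dist x v := by
    intro r h
    induction h with
    | refl => exact le_refl _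
    | tail _ hbc ih => exact le_trans (weight_nonincreasing G hconn x _ _ hbc) ih
  have := hmono q hsteps
  linarith
end
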